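/- Suppose the law ν₀ of X₀ has a density V₀ ∈ L²(0,∞), and let L be a solution of the Brownian McKean–Vlasov problem (MV). Then for every t ≥ 0 the sub-probability measure ν_t(S) := ℙ(X_t ∈ S, t < τ) has a density V_t ∈ L²(0,∞) with ‖V_t‖_{L²(0,∞)} ≤ ‖V₀‖_{L²(0,∞)}. -/

import Mathlib

open MeasureTheory ProbabilityTheory Filter Set Function
open scoped ENNReal

noncomputable section

variable {Ω : Type*} [MeasureSpace Ω]

/-- A standard Brownian motion: continuous paths started at `0`, with independent increments,
and increments over `[s,t]` Gaussian of mean `0` and variance `t − s`. -/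
def IsBrownianMotion (B : ℝ → Ω → ℝ) : Prop :=
  (∀ t, Measurable (B t)) ∧
  (∀ ω, Continuous fun t => B t ω) ∧
  (∀ ω, B 0 ω = 0) ∧
  (∀ s t : ℝ, 0 ≤ s → s ≤ t →
    Measure.map (fun ω => B t ω - B s ω) (ℙ : Measure Ω)
      = gaussianReal 0 (Real.toNNReal (t - s))) ∧
  (∀ (n : ℕ) (u : ℕ → ℝ), Monotone u → 0 ≤ u 0 →
    iIndepFun
      (fun i : Fin n => fun ω => B (u (i + 1)) ω - B (u i) ω) (ℙ : Measure Ω))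

/-- The event that the particle `X_s = X₀ + B_s − α L_s` has reached `(-∞, 0]` by time `t`. -/
def hitByBM (X0 : Ω → ℝ) (B : ℝ → Ω → ℝ) (α : ℝ) (L : ℝ → ℝ) (t : ℝ) : Set Ω :=
  {ω | ∃ s ∈ Set.Icc (0 : ℝ) t, X0 ω + B s ω - α * L s ≤ 0}

/-- A solution of the Brownian McKean--Vlasov problem (MV) (driver `Z = B`, feedback
`f(x) = x`). -/
def IsBrownianMVSolution (X0 : Ω → ℝ) (B : ℝ → Ω → ℝ) (α : ℝ) (L : ℝ → ℝ) : Prop :=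
  MonotoneOn L (Set.Ici 0) ∧ L 0 = 0 ∧ (∀ t, 0 ≤ t → L t ∈ Set.Icc (0 : ℝ) 1) ∧
  (∀ t, 0 ≤ t → ContinuousWithinAt L (Set.Ici t) t) ∧
  (∀ t, 0 ≤ t → L t = ((ℙ : Measure Ω) (hitByBM X0 B α L t)).toReal)

/-- The sub-probability law `ν_t(S) = ℙ(X_t ∈ S, t < τ)`. -/
def brSubLaw (X0 : Ω → ℝ) (B : ℝ → Ω → ℝ) (α : ℝ) (L : ℝ → ℝ) (t : ℝ) : Measure ℝ :=
  Measure.map (fun ω => X0 ω + B t ω - α * L t)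
    ((ℙ : Measure Ω).restrict {ω | ∀ s ∈ Set.Icc (0 : ℝ) t, 0 < X0 ω + B s ω - α * L s})

lemma jensen_sq_aux (γ : Measure ℝ) [IsProbabilityMeasure γ] {f : ℝ → ℝ≥0∞}
    (hf : AEMeasurable f γ) :
    (∫⁻ y, f y ∂γ) ^ (2 : ℝ) ≤ ∫⁻ y, f y ^ (2 : ℝ) ∂γ := by
  have hpq : Real.HolderConjugate 2 2 := Real.HolderConjugate.two_two
  have h := ENNReal.lintegral_mul_le_Lp_mul_Lq γ hpq hf
    (aemeasurable_const (b := (1 : ℝ≥0∞)))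
  simp only [Pi.mul_apply, mul_one, ENNReal.one_rpow, lintegral_one, measure_univ,
    ENNReal.one_rpow, mul_one] at h
  calc (∫⁻ y, f y ∂γ) ^ (2 : ℝ)
      ≤ ((∫⁻ y, f y ^ (2:ℝ) ∂γ) ^ (1/(2:ℝ))) ^ (2:ℝ) :=
        ENNReal.rpow_le_rpow (by simpa using h) (by norm_num)
    _ = ∫⁻ y, f y ^ (2:ℝ) ∂γ := by
        rw [← ENNReal.rpow_mul]; norm_num

lemma setLIntegral_shift_aux (F : ℝ → ℝ≥0∞) (d : ℝ) {S : Set ℝ} (hS : MeasurableSet S) :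
    ∫⁻ x in (fun x => x + d) ⁻¹' S, F x = ∫⁻ z in S, F (z - d) := by
  rw [← lintegral_indicator (hS.preimage (measurable_add_const d)),
    ← lintegral_indicator hS,
    ← lintegral_add_right_eq_self (fun z => S.indicator (fun z => F (z - d)) z) d]
  refine lintegral_congr fun x => ?_
  by_cases hx : x + d ∈ S
  · simp [Set.indicator_of_mem, hx, Set.mem_preimage, add_sub_cancel_right]
  · simp [Set.indicator_of_notMem, hx, Set.mem_preimage]

/-- **(Lemma 3.7: propagation of the `L²` bound.)** If `V₀ ∈ L²(0,∞)`, then for every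
`t ≥ 0` the sub-probability measure `ν_t` has a density `V_t ∈ L²(0,∞)` with
`‖V_t‖_{L²(0,∞)} ≤ ‖V₀‖_{L²(0,∞)}`. -/
theorem mv_L2_density_bound
    (hprob : IsProbabilityMeasure (ℙ : Measure Ω))
    (X0 : Ω → ℝ) (hX0meas : Measurable X0) (hX0pos : ∀ ω, 0 < X0 ω)
    (B : ℝ → Ω → ℝ) (hB : IsBrownianMotion B)
    (hindep : IndepFun X0 (fun ω => fun t => B t ω) (ℙ : Measure Ω))
    (α : ℝ) (hα : 0 < α)
    (V₀ : ℝ → ℝ) (hV₀meas : Measurable V₀) (hV₀nonneg : ∀ x, 0 ≤ V₀ x)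
    (hV₀supp : ∀ x ≤ (0 : ℝ), V₀ x = 0)
    (hdens : Measure.map X0 (ℙ : Measure Ω)
      = volume.withDensity fun x => ENNReal.ofReal (V₀ x))
    (hV₀L2 : MemLp V₀ 2 (volume.restrict (Set.Ioi 0)))
    (L : ℝ → ℝ) (hL : IsBrownianMVSolution X0 B α L)
    (t : ℝ) (ht : 0 ≤ t) :
    ∃ Vt : ℝ → ℝ, Measurable Vt ∧ (∀ x, 0 ≤ Vt x) ∧ (∀ x ≤ (0 : ℝ), Vt x = 0) ∧
      brSubLaw X0 B α L t = volume.withDensity (fun x => ENNReal.ofReal (Vt x)) ∧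
      MemLp Vt 2 (volume.restrict (Set.Ioi 0)) ∧
      eLpNorm Vt 2 (volume.restrict (Set.Ioi 0))
        ≤ eLpNorm V₀ 2 (volume.restrict (Set.Ioi 0)) := by
  classical
  set c : ℝ := α * L t with hc
  set γ : Measure ℝ := gaussianReal 0 (Real.toNNReal t) with hγ
  set V₀ρ : ℝ → ℝ≥0∞ := fun x => ENNReal.ofReal (V₀ x) with hV₀ρ
  have hV₀ρmeas : Measurable V₀ρ := hV₀meas.ennreal_ofReal
  have hBtmeas : Measurable (B t) := hB.1 t
  have hfmeas : Measurable (fun ω => X0 ω + B t ω - c) := (hX0meas.add hBtmeas).sub measurable_const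
  -- law of B t is the Gaussian
  have hBt : Measure.map (B t) (ℙ : Measure Ω) = γ := by
    have h := hB.2.2.2.1 0 t le_rfl ht
    have heq : (fun ω => B t ω - B 0 ω) = B t := by
      funext ω; rw [hB.2.2.1 ω, sub_zero]
    rw [heq] at h
    rw [h, hγ, sub_zero]
  -- independence of X0 and B t
  have hXBt : IndepFun X0 (B t) (ℙ : Measure Ω) := by
    have := hindep.comp (measurable_id : Measurable (id : ℝ → ℝ)) (measurable_pi_apply t)
    exact this
  -- the joint law is the product
  have hmapprod : Measure.map (fun ω => (X0 ω, B t ω)) (ℙ : Measure Ω)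
      = (Measure.map X0 ℙ).prod γ := by
    rw [← hBt]
    exact (indepFun_iff_map_prod_eq_prod_map_map hX0meas.aemeasurable
      hBtmeas.aemeasurable).mp hXBt
  haveI : IsProbabilityMeasure (Measure.map X0 (ℙ : Measure Ω)) :=
    Measure.isProbabilityMeasure_map hX0meas.aemeasurable
  have hprodmeas : Measurable (fun p : ℝ × ℝ => p.1 + p.2 - c) :=
    (measurable_fst.add measurable_snd).sub measurable_const
  set μ : Measure ℝ := Measure.map (fun ω => X0 ω + B t ω - c) (ℙ : Measure Ω) with hμ
  haveI : IsProbabilityMeasure μ := Measure.isProbabilityMeasure_map hfmeas.aemeasurable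
  have hmap2 : μ = Measure.map (fun p : ℝ × ℝ => p.1 + p.2 - c)
      ((Measure.map X0 ℙ).prod γ) := by
    rw [← hmapprod, Measure.map_map hprodmeas (hX0meas.prodMk hBtmeas)]
    rfl
  -- the density of μ
  set g : ℝ → ℝ≥0∞ := fun z => ∫⁻ y, V₀ρ (z - (y - c)) ∂γ with hg
  have hFmeas : Measurable (fun p : ℝ × ℝ => V₀ρ (p.1 - (p.2 - c))) :=
    hV₀ρmeas.comp (measurable_fst.sub (measurable_snd.sub measurable_const))
  have hgmeas : Measurable g := by
    apply Measurable.lintegral_prod_right (f := fun z y => V₀ρ (z - (y - c)))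
    exact hFmeas
  have hμg : μ = volume.withDensity g := by
    rw [hmap2]
    ext S hS
    rw [Measure.map_apply hprodmeas hS, Measure.prod_apply_symm (hprodmeas hS),
      withDensity_apply _ hS]
    have hstep : ∀ y : ℝ, (Measure.map X0 ℙ)
        ((fun x => (x, y)) ⁻¹' ((fun p : ℝ × ℝ => p.1 + p.2 - c) ⁻¹' S))
        = ∫⁻ z in S, V₀ρ (z - (y - c)) ∂volume := by
      intro y
      have hslice : ((fun x => (x, y)) ⁻¹' ((fun p : ℝ × ℝ => p.1 + p.2 - c) ⁻¹' S))
          = (fun x => x + (y - c)) ⁻¹' S := by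
        ext x; simp [Set.mem_preimage, add_sub_assoc]
      rw [hslice, hdens, withDensity_apply _ (hS.preimage (measurable_add_const (y - c)))]
      exact setLIntegral_shift_aux V₀ρ (y - c) hS
    calc ∫⁻ y, (Measure.map X0 ℙ)
          ((fun x => (x, y)) ⁻¹' ((fun p : ℝ × ℝ => p.1 + p.2 - c) ⁻¹' S)) ∂γ
        = ∫⁻ y, ∫⁻ z in S, V₀ρ (z - (y - c)) ∂volume ∂γ := lintegral_congr hstep
      _ = ∫⁻ z in S, g z ∂volume := by
          refine lintegral_lintegral_swap ?_
          exact hFmeas.comp (measurable_snd.prodMk measurable_fst) |>.aemeasurable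
  -- ν ≤ μ
  set ν : Measure ℝ := brSubLaw X0 B α L t with hν
  have hν_def : ν = Measure.map (fun ω => X0 ω + B t ω - c)
      ((ℙ : Measure Ω).restrict
        {ω | ∀ s ∈ Set.Icc (0 : ℝ) t, 0 < X0 ω + B s ω - α * L s}) := rfl
  have hν_le : ν ≤ μ := by
    rw [hν_def, hμ]
    exact Measure.map_mono Measure.restrict_le_self hfmeas
  haveI : IsFiniteMeasure ν := by
    constructor
    calc ν univ ≤ μ univ := hν_le univ
      _ < ⊤ := measure_lt_top μ univ
  have hν_ac : ν ≪ volume :=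
    (Measure.absolutelyContinuous_of_le hν_le).trans
      (hμg ▸ withDensity_absolutelyContinuous volume g)
  -- rnDeriv of ν is bounded by g a.e.
  set r : ℝ → ℝ≥0∞ := ν.rnDeriv volume with hr
  have hrmeas : Measurable r := Measure.measurable_rnDeriv ν volume
  have hr_le_g : ∀ᵐ x ∂(volume : Measure ℝ), r x ≤ g x := by
    have hsub : μ - ν + ν = μ := Measure.sub_add_cancel_of_le hν_le
    have h1 : μ.rnDeriv volume =ᵐ[volume]
        (μ - ν).rnDeriv volume + ν.rnDeriv volume := by
      conv_lhs => rw [← hsub]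
      exact Measure.rnDeriv_add (μ - ν) ν volume
    have h2 : μ.rnDeriv volume =ᵐ[volume] g := by
      rw [hμg]; exact Measure.rnDeriv_withDensity volume hgmeas
    filter_upwards [h1, h2] with x hx1 hx2
    calc r x ≤ (μ - ν).rnDeriv volume x + ν.rnDeriv volume x := le_add_self
      _ = μ.rnDeriv volume x := hx1.symm
      _ = g x := hx2
  -- ν vanishes on Iic 0
  have hν_Iic : ν (Iic 0) = 0 := by
    rw [hν_def, Measure.map_apply hfmeas measurableSet_Iic,
      Measure.restrict_apply (hfmeas measurableSet_Iic)]
    have : (fun ω => X0 ω + B t ω - c) ⁻¹' Iic 0 ∩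
        {ω | ∀ s ∈ Set.Icc (0 : ℝ) t, 0 < X0 ω + B s ω - α * L s} = ∅ := by
      ext ω
      simp only [mem_inter_iff, mem_preimage, mem_Iic, mem_setOf_eq, mem_empty_iff_false,
        iff_false, not_and]
      intro h1 h2
      exact absurd h1 (not_le.mpr (h2 t ⟨ht, le_rfl⟩))
    rw [this]
    exact measure_empty
  have hν_eq : volume.withDensity r = ν := Measure.withDensity_rnDeriv_eq ν volume hν_ac
  have hr0 : ∀ᵐ x ∂(volume : Measure ℝ), x ∈ Iic (0:ℝ) → r x = 0 := by
    have hint : ∫⁻ x in Iic (0:ℝ), r x = 0 := by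
      rw [← withDensity_apply _ measurableSet_Iic, hν_eq, hν_Iic]
    have := (lintegral_eq_zero_iff hrmeas).mp hint
    exact (ae_restrict_iff' measurableSet_Iic).mp this
  have hr_lt_top : ∀ᵐ x ∂(volume : Measure ℝ), r x < ⊤ := Measure.rnDeriv_lt_top ν volume
  -- define Vt
  set Vt : ℝ → ℝ := fun x => if 0 < x then (r x).toReal else 0 with hVt
  have hVtmeas : Measurable Vt := Measurable.ite measurableSet_Ioi hrmeas.ennreal_toReal
    measurable_const
  have hVtnonneg : ∀ x, 0 ≤ Vt x := by
    intro x; rw [hVt]; dsimp only; split <;> simp [ENNReal.toReal_nonneg]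
  have hVtzero : ∀ x ≤ (0:ℝ), Vt x = 0 := by
    intro x hx; rw [hVt]; dsimp only; rw [if_neg (not_lt.mpr hx)]
  -- density property
  have hVt_ae : (fun x => ENNReal.ofReal (Vt x)) =ᵐ[(volume : Measure ℝ)] r := by
    filter_upwards [hr0, hr_lt_top] with x h0 hlt
    rw [hVt]; dsimp only
    by_cases hx : 0 < x
    · rw [if_pos hx, ENNReal.ofReal_toReal hlt.ne]
    · rw [if_neg hx, ENNReal.ofReal_zero, (h0 (not_lt.mp hx)).symm]
  have hdensVt : ν = volume.withDensity (fun x => ENNReal.ofReal (Vt x)) := by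
    rw [withDensity_congr_ae hVt_ae, hν_eq]
  -- a.e. bound ofReal (Vt x) ≤ g x
  have hVt_le_g : ∀ᵐ x ∂(volume : Measure ℝ), ENNReal.ofReal (Vt x) ≤ g x := by
    filter_upwards [hVt_ae, hr_le_g] with x h1 h2
    rw [h1]; exact h2
  -- the key lintegral inequality
  have key : ∫⁻ x in Ioi (0:ℝ), ENNReal.ofReal (Vt x) ^ (2:ℝ)
      ≤ ∫⁻ x in Ioi (0:ℝ), ENNReal.ofReal (V₀ x) ^ (2:ℝ) := by
    calc ∫⁻ x in Ioi (0:ℝ), ENNReal.ofReal (Vt x) ^ (2:ℝ)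
        ≤ ∫⁻ x in Ioi (0:ℝ), g x ^ (2:ℝ) := by
          refine lintegral_mono_ae ?_
          filter_upwards [ae_restrict_of_ae hVt_le_g] with x hx
          exact ENNReal.rpow_le_rpow hx (by norm_num)
      _ ≤ ∫⁻ x, g x ^ (2:ℝ) ∂volume := setLIntegral_le_lintegral _ _
      _ ≤ ∫⁻ x, ∫⁻ y, V₀ρ (x - (y - c)) ^ (2:ℝ) ∂γ ∂volume := by
          refine lintegral_mono fun x => ?_
          refine jensen_sq_aux γ ?_
          exact (hV₀ρmeas.comp (measurable_const.sub
            (measurable_id.sub measurable_const))).aemeasurable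
      _ = ∫⁻ y, ∫⁻ x, V₀ρ (x - (y - c)) ^ (2:ℝ) ∂volume ∂γ := by
          refine lintegral_lintegral_swap ?_
          exact (ENNReal.continuous_rpow_const.measurable.comp hFmeas).aemeasurable
      _ = ∫⁻ y, (∫⁻ x, V₀ρ x ^ (2:ℝ) ∂volume) ∂γ := by
          refine lintegral_congr fun y => ?_
          exact lintegral_sub_right_eq_self (fun x => V₀ρ x ^ (2:ℝ)) (y - c)
      _ = ∫⁻ x, V₀ρ x ^ (2:ℝ) ∂volume := by
          rw [lintegral_const, measure_univ, mul_one]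
      _ = ∫⁻ x in Ioi (0:ℝ), ENNReal.ofReal (V₀ x) ^ (2:ℝ) := by
          rw [← lintegral_add_compl (fun x => V₀ρ x ^ (2:ℝ)) measurableSet_Ioi]
          have hzero : ∫⁻ x in (Ioi (0:ℝ))ᶜ, V₀ρ x ^ (2:ℝ) = 0 := by
            rw [compl_Ioi]
            have : ∀ᵐ x ∂(volume : Measure ℝ), x ∈ Iic (0:ℝ) →
                V₀ρ x ^ (2:ℝ) = (0 : ℝ≥0∞) := by
              refine ae_of_all _ fun x hx => ?_
              rw [hV₀ρ]; dsimp only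
              rw [hV₀supp x hx, ENNReal.ofReal_zero, ENNReal.zero_rpow_of_pos (by norm_num)]
            rw [setLIntegral_congr_fun_ae measurableSet_Iic this, lintegral_zero]
          rw [hzero, add_zero]
  -- convert to eLpNorm
  have hnorm_eq : ∀ (W : ℝ → ℝ), (∀ x, 0 ≤ W x) →
      eLpNorm W 2 (volume.restrict (Set.Ioi 0))
        = (∫⁻ x in Ioi (0:ℝ), ENNReal.ofReal (W x) ^ (2:ℝ)) ^ (1/(2:ℝ)) := by
    intro W hW
    rw [eLpNorm_eq_lintegral_rpow_enorm_toReal (by norm_num) (by norm_num)]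
    have h2 : ((2:ℝ≥0∞)).toReal = (2:ℝ) := by norm_num
    rw [h2]
    congr 1
    refine lintegral_congr fun x => ?_
    rw [← Real.enorm_eq_ofReal (hW x)]
  have hfinal : eLpNorm Vt 2 (volume.restrict (Set.Ioi 0))
      ≤ eLpNorm V₀ 2 (volume.restrict (Set.Ioi 0)) := by
    rw [hnorm_eq Vt hVtnonneg, hnorm_eq V₀ hV₀nonneg]
    exact ENNReal.rpow_le_rpow key (by norm_num)
  refine ⟨Vt, hVtmeas, hVtnonneg, hVtzero, hdensVt, ⟨hVtmeas.aestronglyMeasurable, ?_⟩, hfinal⟩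
  exact lt_of_le_of_lt hfinal hV₀L2.2
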